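/- Let N ≥ 1 and let ψ_1, …, ψ_N be unit vectors in ℂ^d such that |⟨ψ_i, ψ_j⟩| < 1 for all i ≠ j. Then there exists k₀ ∈ ℕ such that for every k ≥ k₀, the N×N matrix with entries ⟨ψ_i, ψ_j⟩^k is positive definite. -/

import Mathlib

/-!
For a Hermitian matrix, Gershgorin's circle theorem places every (real) eigenvalue within
`∑ j ≠ k, ‖A k j‖` of some diagonal entry, so strict diagonal dominance with positive diagonal
gives positive definiteness. The entrywise `k`-th power of the Gram matrix of unit vectors is
Hermitian with unit diagonal, and its off-diagonal entries have modulus `|⟨ψ_i, ψ_j⟩|^k → 0`,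
so it is strictly diagonally dominant for all large `k`.
-/

open Matrix Finset
open scoped ComplexOrder

theorem Matrix.IsHermitian.posDef_of_sum_row_lt_diag {𝕜 n : Type*} [RCLike 𝕜] [Fintype n]
    [DecidableEq n] {A : Matrix n n 𝕜} (hA : A.IsHermitian)
    (h : ∀ k, ∑ j ∈ univ.erase k, ‖A k j‖ < RCLike.re (A k k)) : A.PosDef := by
  refine hA.posDef_iff_eigenvalues_pos.2 fun i => ?_
  have hμ : Module.End.HasEigenvalue (toLin' A) (hA.eigenvalues i : 𝕜) := by
    rw [Module.End.hasEigenvalue_iff_mem_spectrum, spectrum_toLin']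
    exact spectrum.algebraMap_mem 𝕜 (hA.eigenvalues_mem_spectrum_real i)
  obtain ⟨k, hk⟩ := eigenvalue_mem_ball hμ
  rw [Metric.mem_closedBall, dist_eq_norm'] at hk
  have hre := (RCLike.re_le_norm (A k k - hA.eigenvalues i)).trans hk
  simp only [map_sub, RCLike.ofReal_re] at hre
  linarith [h k]

theorem Matrix.isHermitian_of_star_dotProduct_pow {R m n : Type*} [CommSemiring R] [StarRing R]
    [Fintype m] (v : n → m → R) (k : ℕ) :
    (of fun i j => (star (v i) ⬝ᵥ v j) ^ k).IsHermitian := by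
  ext i j
  rw [conjTranspose_apply, of_apply, of_apply, star_pow, star_dotProduct (v i) (v j)]

theorem Matrix.eventually_sum_erase_norm_pow_lt_one {K n : Type*} [SeminormedRing K] [Fintype n]
    [DecidableEq n] {A : Matrix n n K} (h : ∀ i j, i ≠ j → ‖A i j‖ < 1) :
    ∀ᶠ k in Filter.atTop, ∀ i, ∑ j ∈ univ.erase i, ‖A i j‖ ^ k < 1 := by
  refine Filter.eventually_all.2 fun i => ?_
  have hsum := tendsto_finsetSum (univ.erase i) fun j hj =>
    tendsto_pow_atTop_nhds_zero_of_lt_one (norm_nonneg (A i j)) (h i j (ne_of_mem_erase hj).symm)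
  rw [sum_const_zero] at hsum
  exact hsum.eventually_lt_const zero_lt_one

theorem stmt_10_general {d N : ℕ} (ψ : Fin N → (Fin d → ℂ))
    (hψ : ∀ i, star (ψ i) ⬝ᵥ ψ i = 1)
    (hover : ∀ i j, i ≠ j → ‖star (ψ i) ⬝ᵥ ψ j‖ < 1) :
    ∃ k₀ : ℕ, ∀ k ≥ k₀,
      (Matrix.of (fun i j => (star (ψ i) ⬝ᵥ ψ j) ^ k) :
        Matrix (Fin N) (Fin N) ℂ).PosDef := by
  obtain ⟨k₀, hk₀⟩ := Filter.eventually_atTop.1 <|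
    eventually_sum_erase_norm_pow_lt_one (A := of fun i j => star (ψ i) ⬝ᵥ ψ j) hover
  refine ⟨k₀, fun k hk =>
    (isHermitian_of_star_dotProduct_pow ψ k).posDef_of_sum_row_lt_diag fun i => ?_⟩
  simpa [hψ, norm_pow] using hk₀ k hk i

theorem stmt_10 {d N : ℕ} (hN : 1 ≤ N) (ψ : Fin N → (Fin d → ℂ))
    (hψ : ∀ i, star (ψ i) ⬝ᵥ ψ i = 1)
    (hover : ∀ i j, i ≠ j → ‖star (ψ i) ⬝ᵥ ψ j‖ < 1) :
    ∃ k₀ : ℕ, ∀ k ≥ k₀,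
      (Matrix.of (fun i j => (star (ψ i) ⬝ᵥ ψ j) ^ k) :
        Matrix (Fin N) (Fin N) ℂ).PosDef :=
  stmt_10_general ψ hψ hover
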